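/- Assume the loss ℓ has values in [0,1]. Let δ > 0, p ∈ ℕ, and s(n,δ,p) = √( ln((1+n^{2p+1})/δ) / (2n) ). Then with probability at least 1 − δ in x ∼ μ^n, for every r ∈ ℝ with r + s(n,δ,p) < L_min one has φ̂(r, x) ≤ n^{−p} s(n,δ,p), where L_min = ess inf_{h∼π} L(h). In particular, if labels are such that L_min is large while empirical minima are small, the prior volume of hypotheses with empirical loss below L_min − s(n,δ,p) is at most n^{−p} s(n,δ,p) with probability at least 1 − δ. -/

import Mathlib

open MeasureTheory Real Filter

noncomputable section

variable {H X : Type*} [MeasurableSpace H] [MeasurableSpace X]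

/-- Empirical loss of hypothesis `h` on sample `x`. -/
def empLoss (ℓ : H → X → ℝ) (n : ℕ) (h : H) (x : Fin n → X) : ℝ :=
  (∑ i, ℓ h (x i)) / n

/-- True (expected) loss of hypothesis `h`. -/
def trueLoss (ℓ : H → X → ℝ) (μ : Measure X) (h : H) : ℝ :=
  ∫ z, ℓ h z ∂μ

/-- Partition function of the Gibbs posterior. -/
def partitionZ (ℓ : H → X → ℝ) (pr : Measure H) (n : ℕ) (β : ℝ) (x : Fin n → X) : ℝ :=
  ∫ h, Real.exp (-β * empLoss ℓ n h x) ∂pr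

/-- Gibbs posterior at inverse temperature `β`. -/
def gibbs (ℓ : H → X → ℝ) (pr : Measure H) (n : ℕ) (β : ℝ) (x : Fin n → X) : Measure H :=
  pr.withDensity fun h =>
    ENNReal.ofReal (Real.exp (-β * empLoss ℓ n h x) / partitionZ ℓ pr n β x)

/-- Joint measure ρ of the sample and the Gibbs draw, on H × Xⁿ. -/
def jointRho (ℓ : H → X → ℝ) (μ : Measure X) (pr : Measure H) (n : ℕ) (β : ℝ) :
    Measure (H × (Fin n → X)) :=
  (Measure.pi fun _ : Fin n => μ).bind fun x => (gibbs ℓ pr n β x).map fun h => (h, x)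

/-- Cumulative distribution function of the empirical loss under the prior. -/
def phiHat (ℓ : H → X → ℝ) (pr : Measure H) (n : ℕ) (r : ℝ) (x : Fin n → X) : ℝ :=
  (pr {g | empLoss ℓ n g x ≤ r}).toReal

/-- Complexity measure Λ_β(h,x). -/
def Lam (ℓ : H → X → ℝ) (pr : Measure H) (n : ℕ) (β : ℝ) (h : H) (x : Fin n → X) : ℝ :=
  sInf {v : ℝ | ∃ r : ℝ, 0 < phiHat ℓ pr n (empLoss ℓ n h x + r) x ∧
    v = β * r + Real.log (1 / phiHat ℓ pr n (empLoss ℓ n h x + r) x)}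

/-- Relative entropy of two Bernoulli variables. -/
def klBin (p q : ℝ) : ℝ :=
  p * Real.log (p / q) + (1 - p) * Real.log ((1 - p) / (1 - q))

/-!
For π-almost every `g` we have `L(g) ≥ L_min`, so Hoeffding's inequality bounds the probability
of `L̂(g, x) ≤ L_min - s` by `exp (-2 n s²) = δ / (1 + n^(2p+1))`. By Tonelli the expected prior
mass `φ̂(L_min - s, x)` obeys the same bound, and Markov's inequality at the level `n^(-p) s`,
which is at least `1 / (1 + n^(2p+1))` by the choice of `s`, leaves an exceptional event of
probability at most `δ`. Off that event `φ̂(r, x) ≤ φ̂(L_min - s, x) < n^(-p) s` whenever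
`r + s < L_min`.
-/

open ProbabilityTheory
open scoped ENNReal

/-- The paper's deviation `s(n, δ, p)`. -/
def deviationRadius (n : ℕ) (δ : ℝ) (p : ℕ) : ℝ :=
  √(log ((1 + (n : ℝ) ^ (2 * p + 1)) / δ) / (2 * n))

lemma exp_neg_two_mul_sq_deviationRadius {n : ℕ} (hn : 0 < n) {δ : ℝ} (hδ : 0 < δ)
    (hδ1 : δ ≤ 1) (p : ℕ) :
    exp (-2 * n * deviationRadius n δ p ^ 2) = δ / (1 + (n : ℝ) ^ (2 * p + 1)) := by
  have hK : 1 ≤ (1 + (n : ℝ) ^ (2 * p + 1)) / δ := by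
    rw [le_div_iff₀ hδ]
    nlinarith [pow_nonneg (Nat.cast_nonneg n : (0 : ℝ) ≤ n) (2 * p + 1)]
  have hn' : (0 : ℝ) < n := by exact_mod_cast hn
  rw [deviationRadius, sq_sqrt (div_nonneg (log_nonneg hK) (by positivity)),
    show -2 * (n : ℝ) * (log ((1 + (n : ℝ) ^ (2 * p + 1)) / δ) / (2 * n)) =
      -log ((1 + (n : ℝ) ^ (2 * p + 1)) / δ) by field_simp,
    exp_neg, exp_log (by positivity), inv_div]

lemma pow_div_one_add_pow_le_deviationRadius {n : ℕ} (hn : 0 < n) {δ : ℝ} (hδ : 0 < δ)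
    (hδ1 : δ ≤ 1) (p : ℕ) :
    (n : ℝ) ^ p / (1 + (n : ℝ) ^ (2 * p + 1)) ≤ deviationRadius n δ p := by
  set N : ℝ := (n : ℝ) ^ (2 * p + 1)
  have hn' : (1 : ℝ) ≤ n := by exact_mod_cast hn
  have hN : 1 ≤ N := one_le_pow₀ hn'
  have hlog : N / (1 + N) ≤ log ((1 + N) / δ) :=
    calc N / (1 + N) = 1 - (1 + N)⁻¹ := by field_simp; ring
      _ ≤ log (1 + N) := one_sub_inv_le_log_of_pos (by positivity)
      _ ≤ log ((1 + N) / δ) :=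
        log_le_log (by positivity) (le_div_self (by positivity) hδ hδ1)
  have hNn : N = ((n : ℝ) ^ p) ^ 2 * n := by rw [← pow_mul, ← pow_succ, mul_comm]
  refine le_sqrt_of_sq_le ?_
  calc ((n : ℝ) ^ p / (1 + N)) ^ 2 ≤ N / (1 + N) / (2 * n) := by
        rw [div_pow, div_div, div_le_div_iff₀ (by positivity) (by positivity)]
        calc ((n : ℝ) ^ p) ^ 2 * ((1 + N) * (2 * n)) = N * (1 + N) * 2 := by rw [hNn]; ring
          _ ≤ N * (1 + N) * (1 + N) := by gcongr; linarith
          _ = N * (1 + N) ^ 2 := by ring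
    _ ≤ log ((1 + N) / δ) / (2 * n) := by gcongr

lemma exp_neg_two_mul_sq_deviationRadius_le {n : ℕ} (hn : 0 < n) {δ : ℝ} (hδ : 0 < δ)
    (hδ1 : δ ≤ 1) (p : ℕ) :
    exp (-2 * n * deviationRadius n δ p ^ 2) ≤
      δ * (((n : ℝ) ^ p)⁻¹ * deviationRadius n δ p) := by
  rw [exp_neg_two_mul_sq_deviationRadius hn hδ hδ1, div_eq_mul_inv]
  gcongr
  rw [le_inv_mul_iff₀ (by positivity), ← div_eq_mul_inv]
  exact pow_div_one_add_pow_le_deviationRadius hn hδ hδ1 p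

/-- Hoeffding's inequality (lower tail). -/
lemma measureReal_mean_le_integral_sub_le (μ : Measure X) [IsProbabilityMeasure μ]
    {f : X → ℝ} (hf : Measurable f) (h01 : ∀ z, f z ∈ Set.Icc (0 : ℝ) 1)
    {n : ℕ} (hn : 0 < n) {s : ℝ} (hs : 0 ≤ s) :
    (Measure.pi fun _ : Fin n => μ).real {x | (∑ i, f (x i)) / n ≤ ∫ z, f z ∂μ - s} ≤
      exp (-2 * n * s ^ 2) := by
  have hn' : (0 : ℝ) < n := by exact_mod_cast hn
  have hcoord (i : Fin n) : (Measure.pi fun _ : Fin n => μ)[fun x => f (x i)] = ∫ z, f z ∂μ :=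
    integral_comp_eval hf.aestronglyMeasurable
  have hsubG : ∀ i : Fin n, HasSubgaussianMGF
      (fun x : Fin n → X => ∫ z, f z ∂μ - f (x i)) ((‖(1 : ℝ) - 0‖₊ / 2) ^ 2)
      (Measure.pi fun _ : Fin n => μ) := by
    intro i
    have := (hasSubgaussianMGF_of_mem_Icc (μ := Measure.pi fun _ : Fin n => μ)
      (X := fun x => f (x i)) (hf.comp (measurable_pi_apply i)).aemeasurable
      (ae_of_all _ fun x => h01 (x i))).neg
    simpa [hcoord, Pi.neg_def] using this
  have hindep : iIndepFun
      (fun (i : Fin n) (x : Fin n → X) => ∫ z, f z ∂μ - f (x i)) (Measure.pi fun _ : Fin n => μ) :=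
    iIndepFun_pi (X := fun _ z => ∫ z, f z ∂μ - f z)
      fun _ => (measurable_const.sub hf).aemeasurable
  convert HasSubgaussianMGF.measure_sum_ge_le_of_iIndepFun hindep
    (s := Finset.univ) (fun i _ => hsubG i) (mul_nonneg hn'.le hs) using 2
  · ext x
    simp only [Set.mem_ofPred_eq, Finset.sum_sub_distrib, Finset.sum_const, Finset.card_univ,
      Fintype.card_fin, nsmul_eq_mul]
    rw [div_le_iff₀ hn']
    constructor <;> intro h <;> linarith
  · simp only [sub_zero, nnnorm_one, Finset.sum_const, Finset.card_univ, Fintype.card_fin,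
      nsmul_eq_mul, NNReal.coe_mul, NNReal.coe_natCast, NNReal.coe_pow, NNReal.coe_div,
      NNReal.coe_one, NNReal.coe_ofNat]
    field_simp

/-- Markov's inequality combined with Tonelli's theorem. -/
lemma measure_le_measure_prodMk_left_le {Ω : Type*} [MeasurableSpace Ω]
    (ν : Measure Ω) [SFinite ν] (ρ : Measure H) [IsProbabilityMeasure ρ]
    {T : Set (Ω × H)} (hT : MeasurableSet T) {ε : ℝ≥0∞}
    (hε : ∀ᵐ g ∂ρ, ν ((fun x => (x, g)) ⁻¹' T) ≤ ε) {b : ℝ≥0∞} (hb : b ≠ 0) (hb' : b ≠ ∞) :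
    ν {x | b ≤ ρ (Prod.mk x ⁻¹' T)} ≤ ε / b := by
  rw [ENNReal.le_div_iff_mul_le (Or.inl hb) (Or.inl hb'), mul_comm]
  calc b * ν {x | b ≤ ρ (Prod.mk x ⁻¹' T)}
      ≤ ∫⁻ x, ρ (Prod.mk x ⁻¹' T) ∂ν :=
        mul_meas_ge_le_lintegral₀ (measurable_measure_prodMk_left hT).aemeasurable b
    _ = ∫⁻ g, ν ((fun x => (x, g)) ⁻¹' T) ∂ρ := by
        rw [← Measure.prod_apply hT, Measure.prod_apply_symm hT]
    _ ≤ ∫⁻ _, ε ∂ρ := lintegral_mono_ae hε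
    _ = ε := by simp

lemma ofReal_one_sub_le_measure {Ω : Type*} [MeasurableSpace Ω] {ν : Measure Ω}
    [IsProbabilityMeasure ν] {s : Set Ω} {δ : ℝ} (hδ : 0 ≤ δ) (h : ν sᶜ ≤ ENNReal.ofReal δ) :
    ENNReal.ofReal (1 - δ) ≤ ν s := by
  rw [ENNReal.ofReal_sub 1 hδ, ENNReal.ofReal_one, tsub_le_iff_right]
  calc 1 = ν Set.univ := measure_univ.symm
    _ ≤ ν s + ν sᶜ := measure_univ_le_add_compl s
    _ ≤ ν s + ENNReal.ofReal δ := add_le_add_right h _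

lemma measurable_empLoss {ℓ : H → X → ℝ} (hmeas : Measurable (Function.uncurry ℓ)) (n : ℕ) :
    Measurable fun q : (Fin n → X) × H => empLoss ℓ n q.2 q.1 :=
  (Finset.measurable_sum _ fun i _ =>
    hmeas.comp (measurable_snd.prodMk ((measurable_pi_apply i).comp measurable_fst))).div_const _

lemma ae_measure_empLoss_le_essInf_sub_le (μ : Measure X) [IsProbabilityMeasure μ]
    (pr : Measure H) {ℓ : H → X → ℝ} (hmeas : Measurable (Function.uncurry ℓ))
    (hrange : ∀ h z, ℓ h z ∈ Set.Icc (0 : ℝ) 1) {n : ℕ} (hn : 0 < n) {s : ℝ} (hs : 0 ≤ s) :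
    ∀ᵐ g ∂pr, (Measure.pi fun _ : Fin n => μ)
      {x | empLoss ℓ n g x ≤ essInf (trueLoss ℓ μ) pr - s} ≤
        ENNReal.ofReal (exp (-2 * n * s ^ 2)) := by
  filter_upwards [ae_essInf_le (Filter.isBoundedUnder_of
    ⟨0, fun g => (integral_nonneg fun z => (hrange g z).1 : 0 ≤ trueLoss ℓ μ g)⟩)] with g hg
  rw [ENNReal.le_ofReal_iff_toReal_le (measure_ne_top _ _) (exp_pos _).le]
  refine le_trans (measureReal_mono fun x hx => ?_)
    (measureReal_mean_le_integral_sub_le μ (f := ℓ g) (hmeas.comp measurable_prodMk_left)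
      (hrange g) hn hs)
  exact le_trans (a := empLoss ℓ n g x) hx (sub_le_sub_right hg s)

lemma phiHat_mono {Θ Z : Type*} [MeasurableSpace Θ] (ℓ : Θ → Z → ℝ) (pr : Measure Θ)
    [IsFiniteMeasure pr] (n : ℕ) (x : Fin n → Z) : Monotone fun r => phiHat ℓ pr n r x :=
  fun _ _ hr => ENNReal.toReal_mono (measure_ne_top _ _) (measure_mono fun _ hg => le_trans hg hr)

theorem statement19
    (μ : Measure X) [IsProbabilityMeasure μ]
    (pr : Measure H) [IsProbabilityMeasure pr]
    (ℓ : H → X → ℝ) (hmeas : Measurable (Function.uncurry ℓ))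
    (hrange : ∀ h z, ℓ h z ∈ Set.Icc (0 : ℝ) 1)
    (n : ℕ) (hn : 0 < n) (δ : ℝ) (hδ : 0 < δ) (p : ℕ) :
    ENNReal.ofReal (1 - δ) ≤
      (Measure.pi fun _ : Fin n => μ) {x : Fin n → X | ∀ r : ℝ,
        r + Real.sqrt (Real.log ((1 + (n : ℝ) ^ (2 * p + 1)) / δ) / (2 * n)) <
            essInf (trueLoss ℓ μ) pr →
          phiHat ℓ pr n r x ≤
            ((n : ℝ) ^ p)⁻¹ *
              Real.sqrt (Real.log ((1 + (n : ℝ) ^ (2 * p + 1)) / δ) / (2 * n))} := by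
  rcases le_or_gt 1 δ with hδ1 | hδ1
  · simp [ENNReal.ofReal_eq_zero.2 (sub_nonpos.2 hδ1)]
  change _ ≤ (Measure.pi fun _ : Fin n => μ) {x | ∀ r : ℝ,
    r + deviationRadius n δ p < essInf (trueLoss ℓ μ) pr →
      phiHat ℓ pr n r x ≤ ((n : ℝ) ^ p)⁻¹ * deviationRadius n δ p}
  set s := deviationRadius n δ p
  set b := ((n : ℝ) ^ p)⁻¹ * s
  have hs : 0 < s := lt_of_lt_of_le (by positivity)
    (pow_div_one_add_pow_le_deviationRadius hn hδ hδ1.le p)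
  set T := {q : (Fin n → X) × H | empLoss ℓ n q.2 q.1 ≤ essInf (trueLoss ℓ μ) pr - s}
  have hT : MeasurableSet T := measurableSet_le (measurable_empLoss hmeas n) measurable_const
  have hbad : (Measure.pi fun _ : Fin n => μ) {x | ENNReal.ofReal b ≤ pr (Prod.mk x ⁻¹' T)} ≤
      ENNReal.ofReal δ := by
    refine (measure_le_measure_prodMk_left_le _ pr hT
      (ae_measure_empLoss_le_essInf_sub_le μ pr hmeas hrange hn hs.le)
      (ENNReal.ofReal_pos.2 (by positivity)).ne' ENNReal.ofReal_ne_top).trans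
      (ENNReal.div_le_of_le_mul ?_)
    rw [← ENNReal.ofReal_mul hδ.le]
    exact ENNReal.ofReal_le_ofReal (exp_neg_two_mul_sq_deviationRadius_le hn hδ hδ1.le p)
  refine ofReal_one_sub_le_measure hδ.le ((measure_mono fun x hx => ?_).trans hbad)
  simp only [Set.mem_compl_iff, Set.mem_ofPred_eq, not_forall, not_le] at hx
  obtain ⟨r, hr, hbr⟩ := hx
  exact ENNReal.ofReal_le_of_le_toReal
    (hbr.le.trans (phiHat_mono ℓ pr n x (show r ≤ essInf (trueLoss ℓ μ) pr - s by linarith)))
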